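/- Let M be a topological space, ≪ a binary relation on M with open pasts and open futures, and μ a finite Borel measure on M with full support (μ(W) > 0 for every nonempty open W). Let (Uₙ)_{n ∈ ℕ} be a decreasing sequence of TIPs, and for each n set νₙ := inf{μ(V) : V is a TIP and V ⊆ Uₙ}. Suppose that limₙ μ(Uₙ) = limₙ νₙ (both limits exist since μ(Uₙ) is non-increasing and νₙ is non-decreasing and bounded). If W := interior(⋂ₙ Uₙ) is a TIP, then W is a minimal TIP. -/

import Mathlib

open Set Filter Topology MeasureTheory

/-- The chronological past of a set `A` with respect to relation `r`. -/
def chronPast {M : Type*} (r : M → M → Prop) (A : Set M) : Set M :=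
  {x | ∃ y ∈ A, r x y}

/-- The chronological future of a set `A` with respect to relation `r`. -/
def chronFut {M : Type*} (r : M → M → Prop) (A : Set M) : Set M :=
  {x | ∃ y ∈ A, r y x}

/-- A past set: `I⁻(U) = U`. -/
def IsPastSet {M : Type*} (r : M → M → Prop) (U : Set M) : Prop :=
  chronPast r U = U

/-- A future set: `I⁺(U) = U`. -/
def IsFutureSet {M : Type*} (r : M → M → Prop) (U : Set M) : Prop :=
  chronFut r U = U

/-- An indecomposable past set (IP): a nonempty past set that is not the union of
two past sets, each a proper subset of it. -/
def IsIP {M : Type*} (r : M → M → Prop) (U : Set M) : Prop :=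
  U.Nonempty ∧ IsPastSet r U ∧
    ¬ ∃ A B : Set M, IsPastSet r A ∧ IsPastSet r B ∧ A ⊂ U ∧ B ⊂ U ∧ A ∪ B = U

/-- An indecomposable future set (IF). -/
def IsIF {M : Type*} (r : M → M → Prop) (U : Set M) : Prop :=
  U.Nonempty ∧ IsFutureSet r U ∧
    ¬ ∃ A B : Set M, IsFutureSet r A ∧ IsFutureSet r B ∧ A ⊂ U ∧ B ⊂ U ∧ A ∪ B = U

/-- A terminal indecomposable past set (TIP): an IP not of the form `I⁻(p)`. -/
def IsTIP {M : Type*} (r : M → M → Prop) (U : Set M) : Prop :=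
  IsIP r U ∧ ∀ p : M, U ≠ chronPast r {p}

/-- A terminal indecomposable future set (TIF): an IF not of the form `I⁺(p)`. -/
def IsTIF {M : Type*} (r : M → M → Prop) (U : Set M) : Prop :=
  IsIF r U ∧ ∀ p : M, U ≠ chronFut r {p}

/-- A minimal TIP: a TIP containing no TIP as a proper subset. -/
def IsMinTIP {M : Type*} (r : M → M → Prop) (U : Set M) : Prop :=
  IsTIP r U ∧ ∀ V : Set M, IsTIP r V → V ⊆ U → V = U


/-!
If `V ⊆ W` are TIPs with `W = interior (⋂ n, U n)`, then `μ W ≤ lim μ(Uₙ) = lim νₙ ≤ μ V`, so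
`W \ V` is `μ`-null. But a point `x ∈ W \ V` lies in the past of some `y ∈ W`, and then
`I⁺(x) ∩ W` is a nonempty open set which avoids the past set `V`; by full support it has
positive measure, a contradiction.
-/

section Chronology

variable {M : Type*} (r : M → M → Prop)

lemma chronPast_eq_biUnion (A : Set M) : chronPast r A = ⋃ y ∈ A, chronPast r {y} := by
  ext x
  simp [chronPast]

lemma IsTIP.isPastSet {U : Set M} (hU : IsTIP r U) : IsPastSet r U := hU.1.2.1

variable {r}

lemma IsPastSet.isOpen [TopologicalSpace M] (hOpenPast : ∀ p : M, IsOpen (chronPast r {p}))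
    {V : Set M} (hV : IsPastSet r V) : IsOpen V := by
  rw [← hV, chronPast_eq_biUnion]
  exact isOpen_biUnion fun y _ => hOpenPast y

lemma IsPastSet.mem_of_rel {V : Set M} (hV : IsPastSet r V) {x z : M} (hz : z ∈ V)
    (hxz : r x z) : x ∈ V :=
  hV ▸ ⟨z, hz, hxz⟩

lemma chronFut_inter_subset_diff {V : Set M} (hV : IsPastSet r V) {x : M} (hx : x ∉ V)
    (W : Set M) : chronFut r {x} ∩ W ⊆ W \ V := by
  rintro z ⟨⟨_, rfl, hxz⟩, hzW⟩
  exact ⟨hzW, fun hzV => hx (hV.mem_of_rel hzV hxz)⟩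

lemma IsPastSet.chronFut_inter_nonempty {W : Set M} (hW : IsPastSet r W) {x : M} (hx : x ∈ W) :
    (chronFut r {x} ∩ W).Nonempty := by
  obtain ⟨y, hyW, hxy⟩ : x ∈ chronPast r W := hW.symm ▸ hx
  exact ⟨y, ⟨x, rfl, hxy⟩, hyW⟩

lemma IsPastSet.subset_of_measure_diff_eq_zero [TopologicalSpace M] [MeasurableSpace M]
    (hOpenPast : ∀ p : M, IsOpen (chronPast r {p})) (hOpenFut : ∀ p : M, IsOpen (chronFut r {p}))
    {μ : Measure M} (hfull : ∀ W : Set M, IsOpen W → W.Nonempty → 0 < μ W)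
    {V W : Set M} (hV : IsPastSet r V) (hW : IsPastSet r W) (hnull : μ (W \ V) = 0) :
    W ⊆ V := by
  intro x hxW
  by_contra hxV
  have hpos : 0 < μ (chronFut r {x} ∩ W) :=
    hfull _ ((hOpenFut x).inter (hW.isOpen hOpenPast)) (hW.chronFut_inter_nonempty hxW)
  exact hpos.ne' (measure_mono_null (chronFut_inter_subset_diff hV hxV W) hnull)

end Chronology

theorem stmt_8_general {M : Type*} [TopologicalSpace M] [MeasurableSpace M] [BorelSpace M]
    (r : M → M → Prop)
    (hOpenPast : ∀ p : M, IsOpen (chronPast r {p}))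
    (hOpenFut : ∀ p : M, IsOpen (chronFut r {p}))
    (μ : Measure M) [IsFiniteMeasure μ]
    (hfull : ∀ W : Set M, IsOpen W → W.Nonempty → 0 < μ W)
    (U : ℕ → Set M)
    (ν : ℕ → ENNReal)
    (hν : ∀ n, ν n = sInf ((fun V : Set M => μ V) '' {V | IsTIP r V ∧ V ⊆ U n}))
    (L : ENNReal)
    (hlimU : Filter.Tendsto (fun n => μ (U n)) Filter.atTop (nhds L))
    (hlimν : Filter.Tendsto ν Filter.atTop (nhds L))
    (hW : IsTIP r (interior (⋂ n, U n))) :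
    IsMinTIP r (interior (⋂ n, U n)) := by
  set W := interior (⋂ n, U n)
  have hWU (n : ℕ) : W ⊆ U n := interior_subset.trans (iInter_subset U n)
  refine ⟨hW, fun V hV hVW => hVW.antisymm ?_⟩
  have hWL : μ W ≤ L := ge_of_tendsto' hlimU fun n => measure_mono (hWU n)
  have hLV : L ≤ μ V :=
    le_of_tendsto' hlimν fun n => (hν n).trans_le (sInf_le ⟨V, ⟨hV, hVW.trans (hWU n)⟩, rfl⟩)
  have hVW_ae : V =ᵐ[μ] W :=
    ae_eq_of_subset_of_measure_ge hVW (hWL.trans hLV)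
      ((hV.isPastSet r).isOpen hOpenPast).nullMeasurableSet (measure_ne_top μ W)
  exact (hV.isPastSet r).subset_of_measure_diff_eq_zero hOpenPast hOpenFut hfull
    (hW.isPastSet r) (ae_eq_set.1 hVW_ae).2

/-- If `(Uₙ)` is a decreasing sequence of TIPs such that `μ(Uₙ)` and
`νₙ := inf{μ(V) : V a TIP, V ⊆ Uₙ}` converge to the same limit, and the interior of
`⋂ₙ Uₙ` is a TIP, then it is a minimal TIP. -/
theorem stmt_8 {M : Type*} [TopologicalSpace M] [MeasurableSpace M] [BorelSpace M]
    (r : M → M → Prop)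
    (hOpenPast : ∀ p : M, IsOpen (chronPast r {p}))
    (hOpenFut : ∀ p : M, IsOpen (chronFut r {p}))
    (μ : Measure M) [IsFiniteMeasure μ]
    (hfull : ∀ W : Set M, IsOpen W → W.Nonempty → 0 < μ W)
    (U : ℕ → Set M) (hU : ∀ n, IsTIP r (U n))
    (hdec : ∀ n, U (n + 1) ⊆ U n)
    (ν : ℕ → ENNReal)
    (hν : ∀ n, ν n = sInf ((fun V : Set M => μ V) '' {V | IsTIP r V ∧ V ⊆ U n}))
    (L : ENNReal)
    (hlimU : Filter.Tendsto (fun n => μ (U n)) Filter.atTop (nhds L))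
    (hlimν : Filter.Tendsto ν Filter.atTop (nhds L))
    (hW : IsTIP r (interior (⋂ n, U n))) :
    IsMinTIP r (interior (⋂ n, U n)) :=
  stmt_8_general r hOpenPast hOpenFut μ hfull U ν hν L hlimU hlimν hW
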